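/- Let n ≥ 1 and let U_1, ..., U_n be topological spaces with chosen closed subsets ∂U_j ⊆ cl(U_j) such that ∂U_1 is a single point which is a strong deformation retract of cl(U_1) (e.g. cl(U_1) contractible to that point) and each cl(U_j) is contractible. Then the subset ⋃_{j=1}^n cl(U_1) × ... × cl(U_{j-1}) × ∂U_j × cl(U_{j+1}) × ... × cl(U_n) of the product cl(U_1) × ... × cl(U_n) is contractible, provided ∂U_1 is a one-point set and each cl(U_j) is contractible. -/

import Mathlib

open unitInterval

/-
The face union `S = {x | ∃ j, x j ∈ B j}` deformation retracts onto the slice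
`{x | x 0 = p}`: contract the first coordinate to `p` along `H`, which stays in `S` because
`H` fixes `p` and `B 0 = {p}`. The retraction `x ↦ update x 0 p` factors through the full
product, which is contractible, so the identity of `S` is nullhomotopic.
-/

open ContinuousMap in
instance ContractibleSpace.pi {ι : Type*} {X : ι → Type*} [∀ i, TopologicalSpace (X i)]
    [∀ i, ContractibleSpace (X i)] : ContractibleSpace (∀ i, X i) := by
  rw [contractible_iff_id_nullhomotopic]
  choose c hc using fun i => id_nullhomotopic (X i)
  exact ⟨c, Homotopic.pi fun i => (hc i).comp (Homotopic.refl (eval i))⟩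

namespace ContinuousMap

def subtypeVal {Y : Type*} [TopologicalSpace Y] (q : Y → Prop) : C(Subtype q, Y) :=
  ⟨Subtype.val, continuous_subtype_val⟩

namespace Homotopy

variable {X Y : Type*} [TopologicalSpace X] [TopologicalSpace Y]

def codRestrict {q : Y → Prop} {f₀ f₁ : C(X, Subtype q)}
    (F : Homotopy ((subtypeVal q).comp f₀) ((subtypeVal q).comp f₁)) (hF : ∀ x, q (F x)) :
    Homotopy f₀ f₁ where
  toFun x := ⟨F x, hF x⟩
  continuous_toFun := F.continuous.subtype_mk hF
  map_zero_left x := Subtype.ext (F.apply_zero x)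
  map_one_left x := Subtype.ext (F.apply_one x)

end Homotopy

section Update

variable {ι : Type*} [DecidableEq ι] {X : ι → Type*} [∀ i, TopologicalSpace (X i)]

def update (i : ι) (p : X i) : C(∀ j, X j, ∀ j, X j) :=
  ⟨fun x => Function.update x i p, continuous_id.update i continuous_const⟩

def Homotopy.update (i : ι) {p : X i} (H : Homotopy (ContinuousMap.id (X i)) (const (X i) p)) :
    Homotopy (ContinuousMap.id (∀ j, X j)) (ContinuousMap.update i p) where
  toFun tx := Function.update tx.2 i (H (tx.1, tx.2 i))
  continuous_toFun := by fun_prop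
  map_zero_left x := by simp
  map_one_left x := by simp [ContinuousMap.update]

end Update

end ContinuousMap

theorem Function.exists_update_mem_of_exists_mem {ι : Type*} [DecidableEq ι] {X : ι → Type*}
    {B : ∀ i, Set (X i)} {x : ∀ i, X i} (hx : ∃ j, x j ∈ B j) {i : ι} {y : X i}
    (hy : x i ∈ B i → y ∈ B i) : ∃ j, Function.update x i y j ∈ B j := by
  obtain ⟨j, hj⟩ := hx
  by_cases hji : j = i
  · subst hji
    exact ⟨j, by simpa using hy hj⟩
  · exact ⟨j, by rwa [Function.update_of_ne hji]⟩

open ContinuousMap in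
theorem stmt_10_general (n : ℕ) (hn : 0 < n)
    (C : Fin n → Type*) [∀ j, TopologicalSpace (C j)]
    (B : ∀ j, Set (C j))
    (hcontr : ∀ j, ContractibleSpace (C j))
    (p : C ⟨0, hn⟩) (hB0 : B ⟨0, hn⟩ = {p})
    (H : C(C ⟨0, hn⟩ × I, C ⟨0, hn⟩))
    (hH0 : ∀ x, H (x, 0) = x) (hH1 : ∀ x, H (x, 1) = p)
    (hHp : ∀ t, H (p, t) = p) :
    ContractibleSpace {x : ∀ i, C i // ∃ j, x j ∈ B j} := by
  let val := subtypeVal fun x : ∀ i, C i => ∃ j, x j ∈ B j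
  let r : C(∀ i, C i, {x : ∀ i, C i // ∃ j, x j ∈ B j}) :=
    ⟨fun x => ⟨Function.update x ⟨0, hn⟩ p, ⟨0, hn⟩, by simp [hB0]⟩, by fun_prop⟩
  let F :=
    (Homotopy.update (X := C) ⟨0, hn⟩ ⟨H.comp prodSwap, hH0, hH1⟩).compContinuousMap val
  have hF : ∀ tx, ∃ j, F tx j ∈ B j := fun tx =>
    Function.exists_update_mem_of_exists_mem tx.2.2 fun hx => by
      rw [hB0] at hx ⊢
      exact (congrArg (fun y => H (y, tx.1)) hx).trans (hHp tx.1)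
  have hretract : (ContinuousMap.id _).Homotopic (r.comp val) :=
    ⟨Homotopy.codRestrict (f₀ := .id _) (f₁ := r.comp val) F hF⟩
  obtain ⟨q, hq⟩ := ((id_nullhomotopic (∀ i, C i)).comp_left val).comp_right r
  rw [contractible_iff_id_nullhomotopic]
  exact ⟨q, hretract.trans hq⟩

/-- Step (4) in the proof of Theorem 2B.1: with `C j` playing the role of `cl(U_j)` and
`B j ⊆ C j` the role of `∂U_j`, if `B 0` is a one-point set `{p}` which is a strong
deformation retract of `C 0` (witnessed by the homotopy `H`), and each `C j` is
contractible, then the union of the faces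
`⋃ j, C 0 × ⋯ × C (j-1) × B j × C (j+1) × ⋯ × C (n-1)`,
i.e. `{x ∈ ∏ i, C i | ∃ j, x j ∈ B j}`, is contractible. -/
theorem stmt_10 (n : ℕ) (hn : 0 < n)
    (C : Fin n → Type*) [∀ j, TopologicalSpace (C j)]
    (B : ∀ j, Set (C j)) (hBclosed : ∀ j, IsClosed (B j))
    (hcontr : ∀ j, ContractibleSpace (C j))
    (p : C ⟨0, hn⟩) (hB0 : B ⟨0, hn⟩ = {p})
    (H : C(C ⟨0, hn⟩ × I, C ⟨0, hn⟩))
    (hH0 : ∀ x, H (x, 0) = x) (hH1 : ∀ x, H (x, 1) = p)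
    (hHp : ∀ t, H (p, t) = p) :
    ContractibleSpace {x : ∀ i, C i // ∃ j, x j ∈ B j} :=
  stmt_10_general n hn C B hcontr p hB0 H hH0 hH1 hHp
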